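/- Let d be a natural number, let A be an invertible antisymmetric real d×d matrix, and let b ∈ ℝ^d. Then every twice differentiable function y : ℝ → ℝ^d satisfying y″(t) = A²·y(t) + b for all t ∈ ℝ is bounded: there exists M such that ‖y(t)‖ ≤ M for all t ∈ ℝ. -/

import Mathlib

/-!
Translating `y` by `c = (A²)⁻¹ b` gives a solution of `z'' = A² z`. As `A²` is symmetric, the
energy `z' ⬝ z' - z ⬝ A² z` is conserved, and by antisymmetry `-(z ⬝ A² z) = Az ⬝ Az`. Hence `Az`
stays bounded, and so does `z = A⁻¹ (A z)`.
-/

open Matrix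

section Derivatives

variable {𝕜 : Type*} [NontriviallyNormedField 𝕜] {n : Type*} [Fintype n]
  {f g : 𝕜 → n → 𝕜} {f' g' : n → 𝕜} {t : 𝕜}

theorem HasDerivAt.dotProduct (hf : HasDerivAt f f' t) (hg : HasDerivAt g g' t) :
    HasDerivAt (fun s => f s ⬝ᵥ g s) (f' ⬝ᵥ g t + f t ⬝ᵥ g') t := by
  unfold _root_.dotProduct
  rw [← Finset.sum_add_distrib]
  exact HasDerivAt.fun_sum fun i _ => (hasDerivAt_pi.1 hf i).mul (hasDerivAt_pi.1 hg i)

theorem HasDerivAt.mulVec (S : Matrix n n 𝕜) (hf : HasDerivAt f f' t) :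
    HasDerivAt (fun s => S *ᵥ f s) (S *ᵥ f') t :=
  hasDerivAt_pi.2 fun i => HasDerivAt.fun_sum fun j _ => (hasDerivAt_pi.1 hf j).const_mul (S i j)

end Derivatives

variable {n : Type*} [Fintype n]

theorem norm_le_sqrt_dotProduct_self (v : n → ℝ) : ‖v‖ ≤ √(v ⬝ᵥ v) := by
  refine (pi_norm_le_iff_of_nonneg (Real.sqrt_nonneg _)).2 fun i => Real.abs_le_sqrt ?_
  rw [sq]
  exact Finset.single_le_sum (f := fun j => v j * v j) (fun j _ => mul_self_nonneg (v j))
    (Finset.mem_univ i)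

theorem mulVec_dotProduct_mulVec_self_of_transpose_eq_neg {A : Matrix n n ℝ} (hA : Aᵀ = -A)
    (v : n → ℝ) : A *ᵥ v ⬝ᵥ A *ᵥ v = -(v ⬝ᵥ (A * A) *ᵥ v) := by
  rw [dotProduct_mulVec, ← mulVec_transpose, hA, neg_mulVec, mulVec_mulVec, neg_dotProduct,
    dotProduct_comm]

theorem dotProduct_self_sub_dotProduct_mulVec_eq_of_hasDerivAt {S : Matrix n n ℝ} (hS : Sᵀ = S)
    {z z' : ℝ → n → ℝ} (hz : ∀ t, HasDerivAt z (z' t) t)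
    (hz' : ∀ t, HasDerivAt z' (S *ᵥ z t) t) (t : ℝ) :
    z' t ⬝ᵥ z' t - z t ⬝ᵥ S *ᵥ z t = z' 0 ⬝ᵥ z' 0 - z 0 ⬝ᵥ S *ᵥ z 0 := by
  have hE : ∀ s, HasDerivAt (fun s => z' s ⬝ᵥ z' s - z s ⬝ᵥ S *ᵥ z s) 0 s := by
    intro s
    refine (((hz' s).dotProduct (hz' s)).sub ((hz s).dotProduct ((hz s).mulVec S))).congr_deriv ?_
    rw [dotProduct_mulVec (z s), ← mulVec_transpose, hS, dotProduct_comm (z' s) (S *ᵥ z s)]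
    ring
  exact is_const_of_deriv_eq_zero (fun s => (hE s).differentiableAt) (fun s => (hE s).deriv) t 0

section LinftyOpNorm

attribute [local instance] Matrix.linftyOpNormedAddCommGroup

theorem isBounded_range_of_hasDerivAt_of_transpose_eq_neg [DecidableEq n] {A : Matrix n n ℝ}
    (hA : IsUnit A) (hAanti : Aᵀ = -A) {z z' : ℝ → n → ℝ} (hz : ∀ t, HasDerivAt z (z' t) t)
    (hz' : ∀ t, HasDerivAt z' ((A * A) *ᵥ z t) t) :
    Bornology.IsBounded (Set.range z) := by
  have hS : (A * A)ᵀ = A * A := by rw [transpose_mul, hAanti, neg_mul_neg]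
  have hcons := dotProduct_self_sub_dotProduct_mulVec_eq_of_hasDerivAt hS hz hz'
  set E := z' 0 ⬝ᵥ z' 0 - z 0 ⬝ᵥ (A * A) *ᵥ z 0
  have hAz : ∀ t, ‖A *ᵥ z t‖ ≤ √E := fun t => by
    refine (norm_le_sqrt_dotProduct_self _).trans (Real.sqrt_le_sqrt ?_)
    rw [mulVec_dotProduct_mulVec_self_of_transpose_eq_neg hAanti, ← hcons t]
    simpa using dotProduct_star_self_nonneg (z' t)
  have hdet := (isUnit_iff_isUnit_det A).1 hA
  refine isBounded_iff_forall_norm_le.2 ⟨‖A⁻¹‖ * √E, ?_⟩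
  rintro _ ⟨t, rfl⟩
  calc ‖z t‖ = ‖A⁻¹ *ᵥ A *ᵥ z t‖ := by rw [mulVec_mulVec, nonsing_inv_mul A hdet, one_mulVec]
    _ ≤ ‖A⁻¹‖ * ‖A *ᵥ z t‖ := linfty_opNorm_mulVec _ _
    _ ≤ ‖A⁻¹‖ * √E := by gcongr; exact hAz t

end LinftyOpNorm

/-- For an invertible antisymmetric matrix `A`, every twice differentiable solution of
`y″ = A² y + b` is bounded: deviation vectors along the null congruence with
non-degenerate rotation matrix oscillate and remain bounded (stable trapping). -/
theorem stmt15 (d : ℕ) (A : Matrix (Fin d) (Fin d) ℝ)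
    (hA : IsUnit A) (hAanti : Aᵀ = -A)
    (b : Fin d → ℝ) (y : ℝ → (Fin d → ℝ))
    (hy1 : Differentiable ℝ y) (hy2 : Differentiable ℝ (deriv y))
    (hode : ∀ t : ℝ, deriv (deriv y) t = (A * A).mulVec (y t) + b) :
    ∃ M : ℝ, ∀ t : ℝ, ‖y t‖ ≤ M := by
  set c := (A * A)⁻¹ *ᵥ b
  have hc : (A * A) *ᵥ c = b := by
    rw [mulVec_mulVec, mul_nonsing_inv _ ((isUnit_iff_isUnit_det _).1 (hA.mul hA)), one_mulVec]
  have hz : ∀ t, HasDerivAt (fun s => y s + c) (deriv y t) t := fun t =>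
    (hy1 t).hasDerivAt.add_const c
  have hz' : ∀ t, HasDerivAt (deriv y) ((A * A) *ᵥ (y t + c)) t := fun t => by
    rw [mulVec_add, hc, ← hode]
    exact (hy2 t).hasDerivAt
  obtain ⟨C, hC⟩ := isBounded_iff_forall_norm_le.1
    (isBounded_range_of_hasDerivAt_of_transpose_eq_neg hA hAanti hz hz')
  refine ⟨C + ‖c‖, fun t => ?_⟩
  calc ‖y t‖ = ‖(y t + c) - c‖ := by rw [add_sub_cancel_right]
    _ ≤ ‖y t + c‖ + ‖c‖ := norm_sub_le _ _
    _ ≤ C + ‖c‖ := by gcongr; exact hC _ ⟨t, rfl⟩
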